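/- Let T : ℝ^n → ℝ^n be an invertible linear map, let I = [0,1]^n be the unit hypercube, and let U = T(I) be the corresponding parallelotope. Let f be continuous on U, and let F : I → ℝ be an antiderivative of the function x ↦ f(T x) · |det T| on I, i.e. F is continuous on I and its mixed partial derivative ∂_1 ⋯ ∂_n F exists on the open unit cube (0,1)^n and equals f(T x) · |det T| there. Then ∫_U f(y_1,…,y_n) dy_1⋯dy_n = ∑_{s ∈ {0,1}^n} (−1)^{#_0(s)} F(s), where each binary string s ∈ {0,1}^n is regarded as a vertex of the unit cube (so that T s runs over the vertices of U) and #_0(s) is the number of zeros in s. -/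

import Mathlib

/-!
Put `g = |det T| · f ∘ T`, extended continuously beyond the cube, and let
`H x = ∫_0^{x_1} ⋯ ∫_0^{x_n} g` be its iterated primitive. By the change of variables formula
and Fubini the left-hand side is `∫_I g = H (1, …, 1)`, and since `H` vanishes on the faces
`x_j = 0` this is also the alternating vertex sum of `H`. The difference `F - H` has vanishing
mixed derivative in the open cube. Applying the mean value theorem once in each coordinate
shows that its alternating vertex sum over every box `[ε, 1 - ε]^n` vanishes, and letting
`ε → 0` the same holds for the unit cube.
-/

open MeasureTheory

/-- The partial derivative of `F` in the `i`-th coordinate direction. -/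
noncomputable def pd {n : ℕ} (i : Fin n) (F : (Fin n → ℝ) → ℝ) : (Fin n → ℝ) → ℝ :=
  fun x => deriv (fun t : ℝ => F (Function.update x i t)) (x i)

/-- The partial derivative of `F` in the `i`-th coordinate direction exists at `x`. -/
def PdAt {n : ℕ} (i : Fin n) (F : (Fin n → ℝ) → ℝ) (x : Fin n → ℝ) : Prop :=
  DifferentiableAt ℝ (fun t : ℝ => F (Function.update x i t)) (x i)

/-- Iterated partial derivative in the coordinates listed in `l` (the head of the list
being the outermost derivative). For `l = [0, 1, …, n-1]` this is `∂_1 ∂_2 ⋯ ∂_n F`. -/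
noncomputable def mixedD {n : ℕ} : List (Fin n) → ((Fin n → ℝ) → ℝ) → (Fin n → ℝ) → ℝ
  | [], F => F
  | i :: l, F => pd i (mixedD l F)

/-- All the successive partial derivatives in `mixedD l F` exist at every point of `s`. -/
def MixedDiffOn {n : ℕ} : List (Fin n) → ((Fin n → ℝ) → ℝ) → Set (Fin n → ℝ) → Prop
  | [], _, _ => True
  | i :: l, F, s => MixedDiffOn l F s ∧ ∀ x ∈ s, PdAt i (mixedD l F) x

open Set Filter Topology Function

section MixedPartials

variable {n : ℕ}

theorem eventually_update_mem_of_isOpen {U : Set (Fin n → ℝ)} (hU : IsOpen U)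
    {x : Fin n → ℝ} (hx : x ∈ U) (i : Fin n) : ∀ᶠ t in 𝓝 (x i), update x i t ∈ U := by
  have hline : Continuous fun t : ℝ => update x i t := continuous_const.update i continuous_id
  exact hline.continuousAt.preimage_mem_nhds (by rwa [update_eq_self, hU.mem_nhds_iff])

theorem mixedD_sub_eqOn {U : Set (Fin n → ℝ)} (hU : IsOpen U) {l : List (Fin n)}
    {P Q : (Fin n → ℝ) → ℝ} (hP : MixedDiffOn l P U) (hQ : MixedDiffOn l Q U) :
    EqOn (mixedD l (P - Q)) (mixedD l P - mixedD l Q) U := by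
  induction l with
  | nil => exact fun _ _ => rfl
  | cons i l ih =>
    intro x hx
    have hline : (fun t => mixedD l (P - Q) (update x i t)) =ᶠ[𝓝 (x i)]
        fun t => mixedD l P (update x i t) - mixedD l Q (update x i t) :=
      (eventually_update_mem_of_isOpen hU hx i).mono fun t ht => ih hP.1 hQ.1 ht
    exact hline.deriv_eq.trans (deriv_sub (hP.2 x hx) (hQ.2 x hx))

theorem MixedDiffOn.sub {U : Set (Fin n → ℝ)} (hU : IsOpen U) {l : List (Fin n)}
    {P Q : (Fin n → ℝ) → ℝ} (hP : MixedDiffOn l P U) (hQ : MixedDiffOn l Q U) :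
    MixedDiffOn l (P - Q) U := by
  induction l with
  | nil => trivial
  | cons i l ih =>
    refine ⟨ih hP.1 hQ.1, fun x hx => ?_⟩
    have hline : (fun t => mixedD l (P - Q) (update x i t)) =ᶠ[𝓝 (x i)]
        fun t => mixedD l P (update x i t) - mixedD l Q (update x i t) :=
      (eventually_update_mem_of_isOpen hU hx i).mono fun t ht => mixedD_sub_eqOn hU hP.1 hQ.1 ht
    exact hline.differentiableAt_iff.2 ((hP.2 x hx).sub (hQ.2 x hx))

theorem mixedD_comp_update {l : List (Fin n)} {i : Fin n} (hi : i ∉ l)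
    (G : (Fin n → ℝ) → ℝ) (c : ℝ) (x : Fin n → ℝ) :
    mixedD l (fun y => G (update y i c)) x = mixedD l G (update x i c) := by
  induction l generalizing x with
  | nil => rfl
  | cons j l ih =>
    have hji : j ≠ i := fun h => hi (h ▸ List.mem_cons_self)
    show deriv _ _ = deriv _ _
    rw [update_of_ne hji]
    congr 1
    funext t
    rw [ih (fun h => hi (List.mem_cons_of_mem _ h)), update_comm hji]

theorem MixedDiffOn.comp_update {U : Set (Fin n → ℝ)} {l : List (Fin n)} {i : Fin n}
    (hi : i ∉ l) {G : (Fin n → ℝ) → ℝ} (hG : MixedDiffOn l G U) {c : ℝ}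
    (hU : ∀ x ∈ U, update x i c ∈ U) : MixedDiffOn l (fun y => G (update y i c)) U := by
  induction l with
  | nil => trivial
  | cons j l ih =>
    have hji : j ≠ i := fun h => hi (h ▸ List.mem_cons_self)
    have hi' : i ∉ l := fun h => hi (List.mem_cons_of_mem _ h)
    refine ⟨ih hi' hG.1, fun x hx => ?_⟩
    have hline : (fun t => mixedD l (fun y => G (update y i c)) (update x j t)) =
        fun t => mixedD l G (update (update x i c) j t) := by
      funext t
      rw [mixedD_comp_update hi', update_comm hji]
    unfold PdAt
    rw [hline, ← update_of_ne hji c x]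
    exact hG.2 _ (hU x hx)

end MixedPartials

theorem exists_mem_Icc_sub_eq_mul_deriv {φ : ℝ → ℝ} {a b : ℝ} (hab : a ≤ b)
    (hφ : ∀ t ∈ Icc a b, DifferentiableAt ℝ φ t) :
    ∃ c ∈ Icc a b, φ b - φ a = (b - a) * deriv φ c := by
  rcases hab.eq_or_lt with rfl | hlt
  · exact ⟨a, left_mem_Icc.2 le_rfl, by simp⟩
  · obtain ⟨c, hc, hslope⟩ := exists_deriv_eq_slope φ hlt
      (fun t ht => (hφ t ht).continuousAt.continuousWithinAt)
      (fun t ht => (hφ t (Ioo_subset_Icc_self ht)).differentiableWithinAt)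
    exact ⟨c, Ioo_subset_Icc_self hc, by rw [hslope, mul_div_cancel₀ _ (sub_ne_zero.2 hlt.ne')]⟩

section BoxDifferences

variable {n : ℕ}

abbrev openUnitCube (n : ℕ) : Set (Fin n → ℝ) := univ.pi fun _ => Ioo 0 1

theorem isOpen_openUnitCube : IsOpen (openUnitCube n) :=
  isOpen_set_pi finite_univ fun _ _ => isOpen_Ioo

theorem openUnitCube_subset_Icc : openUnitCube n ⊆ Icc 0 1 := fun _ hx =>
  ⟨fun j => (hx j (mem_univ j)).1.le, fun j => (hx j (mem_univ j)).2.le⟩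

theorem update_mem_openUnitCube {x : Fin n → ℝ} (hx : x ∈ openUnitCube n) (i : Fin n)
    {c : ℝ} (hc : c ∈ Ioo 0 1) : update x i c ∈ openUnitCube n :=
  (update_mem_pi_iff_of_mem hx).2 fun _ => hc

def boxDiff (a b : Fin n → ℝ) : List (Fin n) → ((Fin n → ℝ) → ℝ) → (Fin n → ℝ) → ℝ
  | [], G => G
  | i :: l, G => boxDiff a b l ((fun y => G (update y i (b i))) - fun y => G (update y i (a i)))

def boxVertexSum (a b : Fin n → ℝ) (G : (Fin n → ℝ) → ℝ) : ℝ :=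
  ∑ σ : Finset (Fin n), (-1 : ℝ) ^ σ.card * G fun j => if j ∈ σ then a j else b j

theorem boxVertexSum_sub (a b : Fin n → ℝ) (F G : (Fin n → ℝ) → ℝ) :
    boxVertexSum a b (F - G) = boxVertexSum a b F - boxVertexSum a b G := by
  simp only [boxVertexSum, Pi.sub_apply, mul_sub, Finset.sum_sub_distrib]

theorem exists_boxDiff_eq_prod_mul_mixedD {a b : Fin n → ℝ} (ha : a ∈ openUnitCube n)
    (hb : b ∈ openUnitCube n) (hab : a ≤ b) {l : List (Fin n)} (hl : l.Nodup)
    {G : (Fin n → ℝ) → ℝ} (hG : MixedDiffOn l G (openUnitCube n)) {x : Fin n → ℝ}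
    (hx : x ∈ openUnitCube n) :
    ∃ ξ ∈ openUnitCube n, boxDiff a b l G x = (l.map fun j => b j - a j).prod * mixedD l G ξ := by
  induction l generalizing G with
  | nil => exact ⟨x, hx, by simp [boxDiff, mixedD]⟩
  | cons i l ih =>
    obtain ⟨hi, hl⟩ := List.nodup_cons.1 hl
    have hai := mem_univ_pi.1 ha i
    have hbi := mem_univ_pi.1 hb i
    have hGi : ∀ c ∈ Ioo (0 : ℝ) 1,
        MixedDiffOn l (fun y => G (update y i c)) (openUnitCube n) := fun c hc =>
      hG.1.comp_update hi fun y hy => update_mem_openUnitCube hy i hc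
    obtain ⟨ξ, hξ, hrec⟩ :=
      ih hl ((hGi _ hbi).sub isOpen_openUnitCube (hGi _ hai))
    have hline : ∀ t ∈ Icc (a i) (b i), update ξ i t ∈ openUnitCube n := fun t ht =>
      update_mem_openUnitCube hξ i ⟨hai.1.trans_le ht.1, ht.2.trans_lt hbi.2⟩
    obtain ⟨c, hc, hmvt⟩ := exists_mem_Icc_sub_eq_mul_deriv (hab i)
      (φ := fun t => mixedD l G (update ξ i t))
      fun t ht => by simpa [PdAt] using hG.2 _ (hline t ht)
    refine ⟨update ξ i c, hline c hc, ?_⟩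
    have hderiv : mixedD (i :: l) G (update ξ i c) =
        deriv (fun t => mixedD l G (update ξ i t)) c := by
      simp [mixedD, pd]
    rw [boxDiff, hrec, mixedD_sub_eqOn isOpen_openUnitCube (hGi _ hbi) (hGi _ hai) hξ,
      Pi.sub_apply, mixedD_comp_update hi, mixedD_comp_update hi, hmvt, hderiv,
      List.map_cons, List.prod_cons]
    ring

theorem boxDiff_eq_sum (a b : Fin n → ℝ) {l : List (Fin n)} (hl : l.Nodup)
    (G : (Fin n → ℝ) → ℝ) (x : Fin n → ℝ) :
    boxDiff a b l G x = ∑ σ ∈ l.toFinset.powerset, (-1 : ℝ) ^ σ.card *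
      G fun j => if j ∈ l.toFinset then (if j ∈ σ then a j else b j) else x j := by
  induction l generalizing G with
  | nil => simp [boxDiff]
  | cons i l ih =>
    obtain ⟨hi, hl⟩ := List.nodup_cons.1 hl
    have hi' : i ∉ l.toFinset := by simpa using hi
    rw [boxDiff, ih hl, List.toFinset_cons, Finset.sum_powerset_insert hi',
      ← Finset.sum_add_distrib]
    refine Finset.sum_congr rfl fun σ hσ => ?_
    have hiσ : i ∉ σ := fun h => hi' (Finset.mem_powerset.1 hσ h)
    set v : Fin n → ℝ := fun j => if j ∈ l.toFinset then (if j ∈ σ then a j else b j) else x j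
    have hupper : (fun j => if j ∈ insert i l.toFinset then (if j ∈ σ then a j else b j)
        else x j) = update v i (b i) := by
      funext j
      rcases eq_or_ne j i with rfl | hj
      · simp [hiσ]
      · simp [hj, v]
    have hlower : (fun j => if j ∈ insert i l.toFinset then (if j ∈ insert i σ then a j
        else b j) else x j) = update v i (a i) := by
      funext j
      rcases eq_or_ne j i with rfl | hj
      · simp
      · simp [hj, v]
    rw [hupper, hlower, Finset.card_insert_of_notMem hiσ, pow_succ, Pi.sub_apply]
    ring

theorem boxDiff_finRange (a b : Fin n → ℝ) (G : (Fin n → ℝ) → ℝ) (x : Fin n → ℝ) :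
    boxDiff a b (List.finRange n) G x = boxVertexSum a b G := by
  simp [boxDiff_eq_sum a b (List.nodup_finRange n), boxVertexSum]

theorem boxVertexSum_zero_one_eq_zero_of_mixedD_eq_zero {D : (Fin n → ℝ) → ℝ}
    (hD : ContinuousOn D (Icc 0 1)) (hdiff : MixedDiffOn (List.finRange n) D (openUnitCube n))
    (hzero : ∀ x ∈ openUnitCube n, mixedD (List.finRange n) D x = 0) :
    boxVertexSum 0 1 D = 0 := by
  set v : ℝ → ℝ := fun ε => boxVertexSum (fun _ => ε) (fun _ => 1 - ε) D
  have hinner : EqOn v 0 (Ioc 0 (1 / 2)) := by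
    rintro ε ⟨hε0, hε⟩
    have hcube : ∀ c ∈ Ioo (0 : ℝ) 1, (fun _ => c) ∈ openUnitCube n := fun c hc =>
      mem_univ_pi.2 fun _ => hc
    obtain ⟨ξ, hξ, hsum⟩ := exists_boxDiff_eq_prod_mul_mixedD
      (hcube ε ⟨hε0, by linarith⟩) (hcube (1 - ε) ⟨by linarith, by linarith⟩)
      (fun _ => by linarith) (List.nodup_finRange n) hdiff (hcube (1 / 2) ⟨by norm_num, by norm_num⟩)
    rw [boxDiff_finRange, hzero ξ hξ, mul_zero] at hsum
    exact hsum
  have hcont : ContinuousOn v (Icc 0 (1 / 2)) := by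
    refine continuousOn_finsetSum _ fun σ _ => continuousOn_const.mul (hD.comp
      (Continuous.continuousOn (continuous_pi fun j => ?_)) fun ε hε => ?_)
    · split_ifs <;> fun_prop
    · constructor <;> intro j <;> simp only [Pi.zero_apply, Pi.one_apply] <;>
        split_ifs <;> linarith [hε.1, hε.2]
  have h0 := hinner.of_subset_closure hcont continuousOn_const Ioc_subset_Icc_self
    (by rw [closure_Ioc (by norm_num)]) (left_mem_Icc.2 (by norm_num))
  simpa [v, boxVertexSum] using h0

theorem boxVertexSum_zero_one_eq_of_mixedD_eqOn {F G : (Fin n → ℝ) → ℝ}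
    (hF : ContinuousOn F (Icc 0 1)) (hG : ContinuousOn G (Icc 0 1))
    (hFd : MixedDiffOn (List.finRange n) F (openUnitCube n))
    (hGd : MixedDiffOn (List.finRange n) G (openUnitCube n))
    (hFG : EqOn (mixedD (List.finRange n) F) (mixedD (List.finRange n) G) (openUnitCube n)) :
    boxVertexSum 0 1 F = boxVertexSum 0 1 G := by
  rw [← sub_eq_zero, ← boxVertexSum_sub]
  refine boxVertexSum_zero_one_eq_zero_of_mixedD_eq_zero (hF.sub hG)
    (hFd.sub isOpen_openUnitCube hGd) fun x hx => ?_
  rw [mixedD_sub_eqOn isOpen_openUnitCube hFd hGd hx, Pi.sub_apply, hFG hx, sub_self]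

end BoxDifferences

section IteratedPrimitive

variable {n : ℕ}

noncomputable def iteratedPrimitive :
    List (Fin n) → ((Fin n → ℝ) → ℝ) → (Fin n → ℝ) → ℝ
  | [], G => G
  | i :: l, G => fun x => ∫ t in (0 : ℝ)..x i, iteratedPrimitive l G (update x i t)

theorem continuous_iteratedPrimitive {G : (Fin n → ℝ) → ℝ} (hG : Continuous G)
    (l : List (Fin n)) : Continuous (iteratedPrimitive l G) := by
  induction l with
  | nil => exact hG
  | cons i l ih =>
    exact intervalIntegral.continuous_parametric_intervalIntegral_of_continuous
      (f := fun x t => iteratedPrimitive l G (update x i t)) (ih.comp (continuous_fst.update i continuous_snd)) (continuous_apply i)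

theorem hasDerivAt_iteratedPrimitive_cons {G : (Fin n → ℝ) → ℝ} (hG : Continuous G)
    (i : Fin n) (l : List (Fin n)) (x : Fin n → ℝ) :
    HasDerivAt (fun t => iteratedPrimitive (i :: l) G (update x i t))
      (iteratedPrimitive l G x) (x i) := by
  have hline : Continuous fun s : ℝ => iteratedPrimitive l G (update x i s) :=
    (continuous_iteratedPrimitive hG l).comp (continuous_const.update i continuous_id)
  simpa [iteratedPrimitive] using hline.integral_hasStrictDerivAt 0 (x i) |>.hasDerivAt

theorem mixedD_iteratedPrimitive {G : (Fin n → ℝ) → ℝ} (hG : Continuous G)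
    (l l' : List (Fin n)) :
    mixedD l (iteratedPrimitive (l.reverse ++ l') G) = iteratedPrimitive l' G := by
  induction l generalizing l' with
  | nil => rfl
  | cons i l ih =>
    rw [List.reverse_cons, List.append_assoc, List.singleton_append, mixedD, ih]
    funext x
    exact (hasDerivAt_iteratedPrimitive_cons hG i l' x).deriv

theorem mixedDiffOn_iteratedPrimitive {G : (Fin n → ℝ) → ℝ} (hG : Continuous G)
    (l l' : List (Fin n)) (U : Set (Fin n → ℝ)) :
    MixedDiffOn l (iteratedPrimitive (l.reverse ++ l') G) U := by
  induction l generalizing l' with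
  | nil => trivial
  | cons i l ih =>
    rw [List.reverse_cons, List.append_assoc, List.singleton_append]
    refine ⟨ih (i :: l'), fun x _ => ?_⟩
    unfold PdAt
    rw [mixedD_iteratedPrimitive hG]
    exact (hasDerivAt_iteratedPrimitive_cons hG i l' x).differentiableAt

theorem mixedD_iteratedPrimitive_reverse {G : (Fin n → ℝ) → ℝ} (hG : Continuous G)
    (l : List (Fin n)) : mixedD l (iteratedPrimitive l.reverse G) = G := by
  simpa [iteratedPrimitive] using mixedD_iteratedPrimitive hG l []

theorem mixedDiffOn_iteratedPrimitive_reverse {G : (Fin n → ℝ) → ℝ} (hG : Continuous G)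
    (l : List (Fin n)) (U : Set (Fin n → ℝ)) : MixedDiffOn l (iteratedPrimitive l.reverse G) U := by
  simpa using mixedDiffOn_iteratedPrimitive hG l [] U

theorem iteratedPrimitive_eq_zero {G : (Fin n → ℝ) → ℝ} {l : List (Fin n)} {j : Fin n}
    (hj : j ∈ l) {x : Fin n → ℝ} (hx : x j = 0) : iteratedPrimitive l G x = 0 := by
  induction l generalizing x with
  | nil => simp at hj
  | cons i l ih =>
    rcases eq_or_ne j i with rfl | hji
    · simp [iteratedPrimitive, hx]
    · have hj' : j ∈ l := (List.mem_cons.1 hj).resolve_left hji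
      simp [iteratedPrimitive, ih hj', update_of_ne hji, hx]

theorem iteratedPrimitive_sub {P Q : (Fin n → ℝ) → ℝ} (hP : Continuous P) (hQ : Continuous Q)
    (l : List (Fin n)) : iteratedPrimitive l (P - Q) = iteratedPrimitive l P - iteratedPrimitive l Q := by
  induction l with
  | nil => rfl
  | cons i l ih =>
    funext x
    have hline : ∀ {R : (Fin n → ℝ) → ℝ}, Continuous R →
        Continuous fun t : ℝ => iteratedPrimitive l R (update x i t) := fun hR =>
      (continuous_iteratedPrimitive hR l).comp (continuous_const.update i continuous_id)
    simp only [iteratedPrimitive, ih, Pi.sub_apply]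
    exact intervalIntegral.integral_sub ((hline hP).intervalIntegrable _ _)
      ((hline hQ).intervalIntegrable _ _)

theorem boxVertexSum_zero_one_iteratedPrimitive {l : List (Fin n)} (hl : ∀ j, j ∈ l)
    (G : (Fin n → ℝ) → ℝ) :
    boxVertexSum 0 1 (iteratedPrimitive l G) = iteratedPrimitive l G 1 := by
  rw [boxVertexSum, Finset.sum_eq_single ∅]
  · simp [Pi.one_def]
  · intro σ _ hσ
    obtain ⟨j, hj⟩ := Finset.nonempty_iff_ne_empty.2 hσ
    rw [iteratedPrimitive_eq_zero (hl j) (by simp [hj]), mul_zero]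
  · simp

end IteratedPrimitive

theorem lmarginal_le_of_le_const {δ : Type*} {X : δ → Type*} [∀ i, MeasurableSpace (X i)]
    {μ : ∀ i, Measure (X i)} [∀ i, IsProbabilityMeasure (μ i)] [DecidableEq δ] (s : Finset δ)
    {f : (∀ i, X i) → ENNReal} {c : ENNReal} (hf : ∀ y, f y ≤ c) (x : ∀ i, X i) :
    (∫⋯∫⁻_s, f ∂μ) x ≤ c :=
  (lmarginal_mono (g := fun _ => c) hf x).trans_eq (by simp [lmarginal])

section UnitCubeIntegral

variable {n : ℕ}

instance isProbabilityMeasure_restrict_Icc_zero_one :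
    IsProbabilityMeasure (volume.restrict (Icc (0 : ℝ) 1)) := ⟨by simp⟩

theorem iteratedPrimitive_eq_lmarginal {G : (Fin n → ℝ) → ℝ} {M : ℝ} (hG : Continuous G)
    (hG0 : ∀ y, 0 ≤ G y) (hGM : ∀ y, G y ≤ M) {l : List (Fin n)} (hl : l.Nodup)
    {x : Fin n → ℝ} (hx : ∀ j ∈ l, x j = 1) :
    iteratedPrimitive l G x = ((∫⋯∫⁻_l.toFinset, fun y => ENNReal.ofReal (G y)
      ∂fun _ => volume.restrict (Icc (0 : ℝ) 1)) x).toReal := by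
  induction l generalizing x with
  | nil => simp [iteratedPrimitive, hG0 x]
  | cons i l ih =>
    obtain ⟨hi, hl⟩ := List.nodup_cons.1 hl
    have hmeas : Measurable fun y => ENNReal.ofReal (G y) :=
      ENNReal.measurable_ofReal.comp hG.measurable
    set m := ∫⋯∫⁻_l.toFinset, (fun y => ENNReal.ofReal (G y))
      ∂fun _ => volume.restrict (Icc (0 : ℝ) 1)
    have hrec : ∀ t, iteratedPrimitive l G (update x i t) = (m (update x i t)).toReal :=
      fun t => ih hl fun j hj => by
        rw [update_of_ne (ne_of_mem_of_not_mem hj hi)]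
        exact hx j (List.mem_cons_of_mem _ hj)
    have hfin : ∀ t, m (update x i t) ≠ ⊤ := fun t =>
      ne_top_of_le_ne_top ENNReal.ofReal_ne_top (lmarginal_le_of_le_const _
        (fun y => ENNReal.ofReal_le_ofReal (hGM y)) _)
    rw [List.toFinset_cons, lmarginal_insert _ hmeas (by simpa using hi)]
    change ∫ t in (0 : ℝ)..x i, iteratedPrimitive l G (update x i t) = _
    rw [hx i List.mem_cons_self, intervalIntegral.integral_of_le zero_le_one,
      ← integral_Icc_eq_integral_Ioc]
    simp_rw [hrec]
    exact integral_toReal ((hmeas.lmarginal _).comp (measurable_update x)).aemeasurable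
      (.of_forall fun t => (hfin t).lt_top)

theorem iteratedPrimitive_one_eq_setIntegral_of_nonneg {G : (Fin n → ℝ) → ℝ} {M : ℝ}
    (hG : Continuous G) (hG0 : ∀ y, 0 ≤ G y) (hGM : ∀ y, G y ≤ M) :
    iteratedPrimitive (List.finRange n).reverse G 1 = ∫ y in Icc 0 1, G y := by
  rw [iteratedPrimitive_eq_lmarginal hG hG0 hGM (List.nodup_reverse.2 (List.nodup_finRange n))
      (x := 1) fun _ _ => rfl, List.toFinset_reverse, List.toFinset_finRange, lmarginal_univ,
    ← Measure.restrict_pi_pi, ← volume_pi, pi_univ_Icc,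
    integral_eq_lintegral_of_nonneg_ae (.of_forall hG0) hG.aestronglyMeasurable]
  rfl

theorem iteratedPrimitive_one_eq_setIntegral {G : (Fin n → ℝ) → ℝ} {C : ℝ}
    (hG : Continuous G) (hC : ∀ y, |G y| ≤ C) :
    iteratedPrimitive (List.finRange n).reverse G 1 = ∫ y in Icc 0 1, G y := by
  -- The `lintegral` route needs `0 ≤ G`, so split `G` into its positive and negative parts.
  have hparts : G = (fun y => max (G y) 0) - fun y => max (-G y) 0 :=
    funext fun y => (max_zero_sub_max_neg_zero_eq_self (G y)).symm
  have hpos : Continuous fun y => max (G y) 0 := hG.max continuous_const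
  have hneg : Continuous fun y => max (-G y) 0 := hG.neg.max continuous_const
  rw [hparts, iteratedPrimitive_sub hpos hneg, Pi.sub_apply,
    iteratedPrimitive_one_eq_setIntegral_of_nonneg hpos (fun _ => le_max_right _ _)
      fun y => max_le ((le_abs_self _).trans (hC y)) ((abs_nonneg _).trans (hC y)),
    iteratedPrimitive_one_eq_setIntegral_of_nonneg hneg (fun _ => le_max_right _ _)
      fun y => max_le ((neg_le_abs _).trans (hC y)) ((abs_nonneg _).trans (hC y)),
    ← integral_sub hpos.integrableOn_Icc hneg.integrableOn_Icc]
  rfl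

end UnitCubeIntegral

theorem exists_continuous_bounded_eqOn_Icc {ι : Type*} {a b : ι → ℝ} (hab : a ≤ b)
    {φ : (ι → ℝ) → ℝ} (hφ : ContinuousOn φ (Icc a b)) :
    ∃ g : (ι → ℝ) → ℝ, Continuous g ∧ (∃ C, ∀ y, |g y| ≤ C) ∧ EqOn g φ (Icc a b) := by
  set clamp : (ι → ℝ) → ι → ℝ := fun x j => max (a j) (min (b j) (x j))
  have hclamp : Continuous clamp := continuous_pi fun j => by fun_prop
  have hmaps : ∀ x, clamp x ∈ Icc a b := fun x =>
    ⟨fun j => le_max_left _ _, fun j => max_le (hab j) (min_le_left _ _)⟩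
  have hfix : ∀ x ∈ Icc a b, clamp x = x := fun x hx => funext fun j => by
    simp [clamp, min_eq_right (hx.2 j), max_eq_right (hx.1 j)]
  obtain ⟨C, hC⟩ := isCompact_Icc.exists_bound_of_continuousOn hφ
  exact ⟨φ ∘ clamp, hφ.comp_continuous hclamp hmaps, ⟨C, fun y => hC _ (hmaps y)⟩,
    fun x hx => by simp [hfix x hx]⟩

theorem setIntegral_image_linearEquiv {E F : Type*} [NormedAddCommGroup E] [NormedSpace ℝ E]
    [FiniteDimensional ℝ E] [MeasurableSpace E] [BorelSpace E] [NormedAddCommGroup F]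
    [NormedSpace ℝ F] (μ : Measure E) [μ.IsAddHaarMeasure] (T : E ≃ₗ[ℝ] E) {s : Set E}
    (hs : MeasurableSet s) (f : E → F) :
    ∫ y in T '' s, f y ∂μ = ∫ x in s, |LinearMap.det (T : E →ₗ[ℝ] E)| • f (T x) ∂μ := by
  set L : E →L[ℝ] E := LinearMap.toContinuousLinearMap (T : E →ₗ[ℝ] E)
  exact integral_image_eq_integral_abs_det_fderiv_smul μ hs
    (fun x _ => L.hasFDerivAt.hasFDerivWithinAt) T.injective.injOn f

theorem sum_bool_eq_boxVertexSum_zero_one {n : ℕ} (G : (Fin n → ℝ) → ℝ) :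
    ∑ s : Fin n → Bool, (-1 : ℝ) ^ (Finset.univ.filter fun j => s j = false).card *
      G (fun j => if s j then 1 else 0) = boxVertexSum 0 1 G := by
  refine Fintype.sum_bijective (fun s => Finset.univ.filter fun j => s j = false)
    ⟨fun s t hst => funext fun j => ?_, fun σ => ⟨fun j => decide (j ∉ σ), by ext; simp⟩⟩
    _ _ fun s => ?_
  · have hj := Finset.ext_iff.1 hst j
    simp only [Finset.mem_filter, Finset.mem_univ, true_and] at hj
    cases hs : s j <;> cases ht : t j <;> simp_all
  · congr 2
    funext j
    cases hs : s j <;> simp [hs]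

/-- Let `T : ℝ^n → ℝ^n` be an invertible linear map, `I = [0,1]^n` the
unit hypercube and `U = T(I)` the corresponding parallelotope. Let `f` be continuous on `U`,
and let `F` be an antiderivative on `I` of `x ↦ f(T x) · |det T|`: `F` is continuous on `I`
and its mixed partial derivative `∂_1 ⋯ ∂_n F` exists on the open unit cube `(0,1)^n` and
equals `f(T x) · |det T|` there. Then
`∫_U f = ∑_{s ∈ {0,1}^n} (−1)^{#_0(s)} F(s)`, where each binary string `s` is regarded as a
vertex of the unit cube (so that `T s` runs over the vertices of `U`) and `#_0(s)` is the
number of zeros in `s`. -/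
theorem integral_parallelotope_eq_alternating_vertex_sum (n : ℕ)
    (T : (Fin n → ℝ) ≃ₗ[ℝ] (Fin n → ℝ)) (f F : (Fin n → ℝ) → ℝ)
    (hf : ContinuousOn f (⇑T '' Set.Icc (0 : Fin n → ℝ) 1))
    (hF : ContinuousOn F (Set.Icc (0 : Fin n → ℝ) 1))
    (hdiff : MixedDiffOn (List.finRange n) F (Set.pi Set.univ fun _ => Set.Ioo (0 : ℝ) 1))
    (hpde : ∀ x ∈ Set.pi Set.univ fun _ => Set.Ioo (0 : ℝ) 1,
      mixedD (List.finRange n) F x =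
        f (T x) * |LinearMap.det (T : (Fin n → ℝ) →ₗ[ℝ] (Fin n → ℝ))|) :
    ∫ y in ⇑T '' Set.Icc (0 : Fin n → ℝ) 1, f y =
      ∑ s : Fin n → Bool,
        (-1 : ℝ) ^ (Finset.univ.filter fun j => s j = false).card *
          F (fun j => if s j then 1 else 0) := by
  -- `f ∘ T` is only controlled on the cube, while `iteratedPrimitive` wants a continuous,
  -- bounded function on all of `ℝⁿ`.
  obtain ⟨g, hg, ⟨C, hC⟩, hgf⟩ := exists_continuous_bounded_eqOn_Icc zero_le_one
    ((hf.comp T.continuous_of_finiteDimensional.continuousOn (mapsTo_image _ _)).mul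
      (continuousOn_const (c := |LinearMap.det (T : (Fin n → ℝ) →ₗ[ℝ] (Fin n → ℝ))|)))
  set H := iteratedPrimitive (List.finRange n).reverse g
  have hFH : boxVertexSum 0 1 F = boxVertexSum 0 1 H :=
    boxVertexSum_zero_one_eq_of_mixedD_eqOn hF (continuous_iteratedPrimitive hg _).continuousOn
      hdiff (mixedDiffOn_iteratedPrimitive_reverse hg _ _) fun x hx => by
        rw [hpde x hx, mixedD_iteratedPrimitive_reverse hg, hgf (openUnitCube_subset_Icc hx)]
        rfl
  calc ∫ y in ⇑T '' Set.Icc (0 : Fin n → ℝ) 1, f y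
      = ∫ x in Icc 0 1, g x := by
        rw [setIntegral_image_linearEquiv volume T measurableSet_Icc]
        exact setIntegral_congr_fun measurableSet_Icc fun x hx => by
          rw [hgf hx, smul_eq_mul, mul_comm]
          rfl
    _ = boxVertexSum 0 1 H := by
        rw [boxVertexSum_zero_one_iteratedPrimitive (by simp),
          iteratedPrimitive_one_eq_setIntegral hg hC]
    _ = _ := by rw [← hFH, sum_bool_eq_boxVertexSum_zero_one]
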